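/- Let G be a topological group and A a compact G-group with a presentation A = lim_r A_r as the inverse limit of an inverse system {A_r, φ_{rt}} over a directed poset R of compact Hausdorff G-groups with continuous G-equivariant transition homomorphisms, and let φ_r : A → A_r denote the natural projections. Then the map Θ : H¹_cts(G,A)_po → lim_r H¹_cts(G,A_r)_po given by [a] ↦ ([φ_r ∘ a])_r is a well-defined continuous bijection onto the inverse limit of the spaces H¹_cts(G,A_r)_po. In particular, if G is a compact Hausdorff space and A is evenly continuous with respect to G, then Θ is a homeomorphism. -/

import Mathlib

/-- A set `F` of maps `B → A` is evenly continuous. -/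
def EvenlyContinuousSet {B A : Type} [TopologicalSpace B] [TopologicalSpace A]
    (F : Set (B → A)) : Prop :=
  ∀ b : B, ∀ a : A, ∀ U ∈ nhds a, ∃ V ∈ nhds b, ∃ W ∈ nhds a,
    ∀ f ∈ F, f b ∈ W → ∀ v ∈ V, f v ∈ U

section Setup

variable {G : Type} [Group G] [TopologicalSpace G]
variable {R : Type} [PartialOrder R]
variable {Ar : R → Type} [∀ r, Group (Ar r)] [∀ r, TopologicalSpace (Ar r)]

/-- The inverse limit `A = {(x_r) ∈ ∏ A_r | φ_{rt}(x_r) = x_t}` of the system, with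
the subspace topology of the product topology (its group operations and `G`-action
are coordinatewise). -/
abbrev InvLim (φ : ∀ ⦃r t : R⦄, t ≤ r → Ar r → Ar t) : Type :=
  {x : ∀ r, Ar r // ∀ (r t : R) (h : t ≤ r), φ h (x r) = x t}

/-- `Z¹_cts(G, lim A_r)_po`: continuous 1-cocycles of `G` in the inverse limit,
the cocycle identity being stated coordinatewise (the limit's multiplication and
`G`-action are coordinatewise), with the point-open topology. -/
abbrev Z1Lim (acr : ∀ r, G → Ar r → Ar r) (φ : ∀ ⦃r t : R⦄, t ≤ r → Ar r → Ar t) :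
    Type :=
  {a : G → InvLim φ // Continuous a ∧
    ∀ (s t : G) (r : R), (a (s * t)).val r = (a s).val r * acr r s ((a t).val r)}

/-- The cohomology relation on `Z¹_cts(G, lim A_r)_po`. -/
def CohLim (acr : ∀ r, G → Ar r → Ar r) (φ : ∀ ⦃r t : R⦄, t ≤ r → Ar r → Ar t)
    (a b : Z1Lim acr φ) : Prop :=
  ∃ x : InvLim φ, ∀ (s : G) (r : R),
    (b.val s).val r = (x.val r)⁻¹ * (a.val s).val r * acr r s (x.val r)

/-- `Z¹_cts(G, A_r)_po` for an individual term of the system. -/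
abbrev Z1r (acr : ∀ r, G → Ar r → Ar r) (r : R) : Type :=
  {b : G → Ar r // Continuous b ∧ ∀ s t : G, b (s * t) = b s * acr r s (b t)}

/-- The cohomology relation on `Z¹_cts(G, A_r)_po`. -/
def Cohr (acr : ∀ r, G → Ar r → Ar r) (r : R) (b b' : Z1r acr r) : Prop :=
  ∃ x : Ar r, ∀ s : G, b'.val s = x⁻¹ * b.val s * acr r s x

end Setup

/-!
`Θ` is induced by the continuous projections `Z¹(G, A) → Z¹(G, A_r)`, so it is continuous.
Injectivity and surjectivity are both compactness arguments: the elements of `A_r` conjugating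
`φ_r ∘ a` into `φ_r ∘ b`, respectively the cocycles `G → A_r` cohomologous to a chosen
representative of the `r`-th class, form nonempty compact sets mapped into each other by the
transition maps, and such an inverse system of compact sets has a compatible section.

For the homeomorphism, even continuity makes the continuous maps closed in the point-open
topology, so `Z¹_cts(G, A)_po` is compact by Tychonoff. Each `H¹_cts(G, A_r)_po` is the orbit
space of an action of the compact group `A_r`, hence Hausdorff, and a continuous bijection from
a compact space onto a Hausdorff space is a homeomorphism.
-/

open Function

theorem exists_mem_sections_of_isCompact {R : Type} [PartialOrder R] [IsDirected R (· ≤ ·)]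
    {Z : R → Type} [∀ r, TopologicalSpace (Z r)] [∀ r, T2Space (Z r)]
    (ψ : ∀ ⦃r t : R⦄, t ≤ r → Z r → Z t)
    (hψid : ∀ (r : R) (x : Z r), ψ (le_refl r) x = x)
    (hψcomp : ∀ (r t u : R) (h1 : u ≤ t) (h2 : t ≤ r) (x : Z r),
      ψ h1 (ψ h2 x) = ψ (h1.trans h2) x)
    (hψcont : ∀ (r t : R) (h : t ≤ r), Continuous (ψ h))
    (X : ∀ r, Set (Z r)) (hXne : ∀ r, (X r).Nonempty) (hXc : ∀ r, IsCompact (X r))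
    (hXmap : ∀ (r t : R) (h : t ≤ r), ∀ x ∈ X r, ψ h x ∈ X t) :
    ∃ x : ∀ r, Z r, (∀ r, x r ∈ X r) ∧ ∀ (r t : R) (h : t ≤ r), ψ h (x r) = x t := by
  classical
  rcases isEmpty_or_nonempty R with hR | hR
  · exact ⟨isEmptyElim, isEmptyElim, fun r => isEmptyElim r⟩
  let D : R → Set (∀ r, Z r) := fun r =>
    Set.univ.pi X ∩ ⋂ (t : R) (h : t ≤ r), {x | ψ h (x r) = x t}
  have hDcl : ∀ r, IsClosed (D r) := fun r =>
    (isClosed_set_pi fun u _ => (hXc u).isClosed).inter <|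
      isClosed_iInter fun t => isClosed_iInter fun h =>
        isClosed_eq ((hψcont r t h).comp (continuous_apply r)) (continuous_apply t)
  have hDc : ∀ r, IsCompact (D r) := fun r =>
    (isCompact_univ_pi hXc).of_isClosed_subset (hDcl r) Set.inter_subset_left
  have hDne : ∀ r, (D r).Nonempty := by
    intro r
    obtain ⟨y, hy⟩ := hXne r
    refine ⟨fun u => if h : u ≤ r then ψ h y else (hXne u).some, fun u _ => ?_, ?_⟩
    · by_cases h : u ≤ r
      · simpa [h] using hXmap r u h y hy
      · simpa [h] using (hXne u).some_mem
    · simp only [Set.mem_iInter, Set.mem_ofPred_eq]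
      intro t h
      simp [h, hψid]
  have hDanti : Antitone D := by
    rintro r r' hrr' x ⟨hxX, hx⟩
    simp only [Set.mem_iInter, Set.mem_ofPred_eq] at hx
    refine ⟨hxX, Set.mem_iInter₂.2 fun t ht => ?_⟩
    rw [Set.mem_ofPred_eq, ← hx r hrr', hψcomp, hx t (ht.trans hrr')]
  obtain ⟨x, hx⟩ := IsCompact.nonempty_iInter_of_directed_nonempty_isCompact_isClosed D
    hDanti.directed_ge hDne hDc hDcl
  simp only [D, Set.mem_iInter, Set.mem_inter_iff, Set.mem_pi, Set.mem_univ, true_imp_iff,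
    Set.mem_ofPred_eq] at hx
  exact ⟨x, fun r => (hx r).1 r, fun r t h => (hx r).2 t h⟩

theorem t2Space_quot_of_compactSpace {X K : Type} [TopologicalSpace X] [T2Space X]
    [TopologicalSpace K] [CompactSpace K] {rel : X → X → Prop} (hrel : Equivalence rel)
    (act : X → K → X) (hact : Continuous (uncurry act))
    (hrel_act : ∀ x y, rel x y ↔ ∃ k, y = act x k) : T2Space (Quot rel) := by
  have hmk : ∀ x y, Quot.mk rel x = Quot.mk rel y ↔ rel x y := fun _ _ =>
    Quot.eq.trans hrel.eqvGen_iff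
  have hopen : IsOpenQuotientMap (Quot.mk rel) := by
    refine ⟨Quot.mk_surjective, continuous_quot_mk, fun O hO => ?_⟩
    rw [← isQuotientMap_quot_mk.isOpen_preimage]
    have hsat : Quot.mk rel ⁻¹' (Quot.mk rel '' O) = ⋃ k, (act · k) ⁻¹' O := by
      ext y
      simp only [Set.mem_preimage, Set.mem_image, Set.mem_iUnion, hmk]
      constructor
      · rintro ⟨x, hx, hxy⟩
        obtain ⟨k, rfl⟩ := (hrel_act y x).1 (hrel.symm hxy)
        exact ⟨k, hx⟩
      · rintro ⟨k, hk⟩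
        exact ⟨_, hk, hrel.symm ((hrel_act _ _).2 ⟨k, rfl⟩)⟩
    rw [hsat]
    exact isOpen_iUnion fun k => hO.preimage (hact.comp (continuous_id.prodMk continuous_const))
  rw [t2Space_iff_of_isOpenQuotientMap hopen]
  have hgraph : {q : X × X | Quot.mk rel q.1 = Quot.mk rel q.2} =
      Prod.fst '' {p : (X × X) × K | p.1.2 = act p.1.1 p.2} := by
    ext ⟨x, y⟩
    simp [hmk, hrel_act]
  rw [hgraph]
  exact isClosedMap_fst_of_compactSpace _ <| isClosed_eq (continuous_snd.comp continuous_fst)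
    (hact.comp ((continuous_fst.comp continuous_fst).prodMk continuous_snd))

theorem EvenlyContinuousSet.continuous_of_mem_closure {B A : Type} [TopologicalSpace B]
    [TopologicalSpace A] [RegularSpace A] {F : Set (B → A)} (hF : EvenlyContinuousSet F)
    {g : B → A} (hg : g ∈ closure F) : Continuous g := by
  refine continuous_iff_continuousAt.2 fun b => ?_
  refine (closed_nhds_basis (g b)).tendsto_right_iff.2 fun C ⟨hC, hCcl⟩ => ?_
  obtain ⟨V, hV, W, hW, hVW⟩ := hF b (g b) C hC
  filter_upwards [hV] with v hv
  -- `g v` is a limit of values `f v` with `f ∈ F` and `f b ∈ W`, all of which lie in `C`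
  refine hCcl.closure_subset (mem_closure_iff_nhds.2 fun N hN => ?_)
  obtain ⟨f, ⟨hfb, hfv⟩, hfF⟩ := mem_closure_iff_nhds.1 hg _ <|
    Filter.inter_mem ((continuous_apply b).continuousAt.preimage_mem_nhds hW)
      ((continuous_apply v).continuousAt.preimage_mem_nhds hN)
  exact ⟨f v, hfv, hVW f hfF hfb v hv⟩

section Twist

variable {G A : Type} [Group A]

/-- The paper's right action `b.x` of `A` on maps `G → A`. -/
def twist (act : G → A → A) (b : G → A) (x : A) : G → A := fun s => x⁻¹ * b s * act s x

variable {act : G → A → A}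

theorem twist_twist (hact : ∀ s x y, act s (x * y) = act s x * act s y) (b : G → A) (x y : A) :
    twist act (twist act b x) y = twist act b (x * y) := by
  funext s
  simp only [twist, hact, mul_inv_rev]
  group

theorem twist_one (hact : ∀ s x y, act s (x * y) = act s x * act s y) (b : G → A) :
    twist act b 1 = b := by
  funext s
  have hone : act s 1 = 1 := map_one (MonoidHom.mk' (act s) (hact s))
  simp [twist, hone]

theorem comp_twist {B : Type} [Group B] {actB : G → B → B} (f : A → B)
    (hf : ∀ x y, f (x * y) = f x * f y) (hfact : ∀ s x, f (act s x) = actB s (f x))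
    (b : G → A) (x : A) : f ∘ twist act b x = twist actB (f ∘ b) (f x) := by
  funext s
  have hinv : f x⁻¹ = (f x)⁻¹ := map_inv (MonoidHom.mk' f hf) x
  simp [twist, hf, hfact, hinv]

theorem twist_cocycle [Mul G] (hact : ∀ s x y, act s (x * y) = act s x * act s y)
    (hcomp : ∀ s t x, act (s * t) x = act s (act t x)) {b : G → A}
    (hb : ∀ s t, b (s * t) = b s * act s (b t)) (x : A) (s t : G) :
    twist act b x (s * t) = twist act b x s * act s (twist act b x t) := by
  have hinv : act s x⁻¹ = (act s x)⁻¹ := map_inv (MonoidHom.mk' (act s) (hact s)) x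
  simp only [twist, hb, hcomp, hact, hinv]
  group

theorem Continuous.twist [TopologicalSpace G] [TopologicalSpace A] [ContinuousMul A]
    {b : G → A} (hb : Continuous b) (x : A) (hact : Continuous fun s => act s x) :
    Continuous (twist act b x) :=
  (continuous_const.mul hb).mul hact

theorem continuous_twist_right [TopologicalSpace A] [IsTopologicalGroup A]
    (hact : ∀ s, Continuous (act s)) (b : G → A) : Continuous (twist act b) :=
  continuous_pi fun s => (continuous_inv.mul continuous_const).mul (hact s)

end Twist

section Cohomology

variable {G : Type} [Group G] [TopologicalSpace G]
variable {R : Type} {Ar : R → Type} [∀ r, Group (Ar r)] [∀ r, TopologicalSpace (Ar r)]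
variable {acr : ∀ r, G → Ar r → Ar r}

theorem cohr_iff_exists_twist {r : R} {b b' : Z1r acr r} :
    Cohr acr r b b' ↔ ∃ x, b'.val = twist (acr r) b.val x :=
  exists_congr fun _ => funext_iff.symm

theorem cohr_equivalence
    (hdistr : ∀ r (s : G) (x y : Ar r), acr r s (x * y) = acr r s x * acr r s y)
    (r : R) : Equivalence (Cohr acr r) := by
  refine ⟨fun b => cohr_iff_exists_twist.2 ⟨1, (twist_one (hdistr r) _).symm⟩,
    fun hbb' => ?_, fun hbb' hb'b'' => ?_⟩
  · obtain ⟨x, hx⟩ := cohr_iff_exists_twist.1 hbb'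
    refine cohr_iff_exists_twist.2 ⟨x⁻¹, ?_⟩
    rw [hx, twist_twist (hdistr r), mul_inv_cancel, twist_one (hdistr r)]
  · obtain ⟨x, hx⟩ := cohr_iff_exists_twist.1 hbb'
    obtain ⟨y, hy⟩ := cohr_iff_exists_twist.1 hb'b''
    exact cohr_iff_exists_twist.2 ⟨x * y, by rw [hy, hx, twist_twist (hdistr r)]⟩

theorem quot_mk_cohr_eq_iff
    (hdistr : ∀ r (s : G) (x y : Ar r), acr r s (x * y) = acr r s x * acr r s y)
    {r : R} {b b' : Z1r acr r} : Quot.mk (Cohr acr r) b = Quot.mk _ b' ↔ Cohr acr r b b' :=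
  Quot.eq.trans (cohr_equivalence hdistr r).eqvGen_iff

def z1rTwist [∀ r, ContinuousMul (Ar r)]
    (hacr : ∀ r, Continuous fun p : G × Ar r => acr r p.1 p.2)
    (hcompr : ∀ r (s t : G) (x : Ar r), acr r (s * t) x = acr r s (acr r t x))
    (hdistr : ∀ r (s : G) (x y : Ar r), acr r s (x * y) = acr r s x * acr r s y)
    {r : R} (b : Z1r acr r) (x : Ar r) : Z1r acr r :=
  ⟨twist (acr r) b.val x, b.prop.1.twist x ((hacr r).comp (Continuous.prodMk_left x)),
    twist_cocycle (hdistr r) (hcompr r) b.prop.2 x⟩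

theorem t2Space_quot_cohr [∀ r, IsTopologicalGroup (Ar r)] [∀ r, T2Space (Ar r)]
    [∀ r, CompactSpace (Ar r)]
    (hacr : ∀ r, Continuous fun p : G × Ar r => acr r p.1 p.2)
    (hcompr : ∀ r (s t : G) (x : Ar r), acr r (s * t) x = acr r s (acr r t x))
    (hdistr : ∀ r (s : G) (x y : Ar r), acr r s (x * y) = acr r s x * acr r s y)
    (r : R) : T2Space (Quot (Cohr acr r)) := by
  refine t2Space_quot_of_compactSpace (cohr_equivalence hdistr r)
    (z1rTwist hacr hcompr hdistr) ?_ fun b b' => ?_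
  · refine Continuous.subtype_mk (continuous_pi fun s => ?_) _
    exact ((continuous_snd.inv).mul ((continuous_apply s).comp
      (continuous_subtype_val.comp continuous_fst))).mul
      ((hacr r).comp (continuous_const.prodMk continuous_snd))
  · simp only [cohr_iff_exists_twist, Subtype.ext_iff]
    rfl

variable [PartialOrder R] {φ : ∀ ⦃r t : R⦄, t ≤ r → Ar r → Ar t}

/-- The cocycle `φ_r ∘ a`. -/
def z1LimProj (a : Z1Lim acr φ) (r : R) : Z1r acr r :=
  ⟨fun s => (a.val s).val r,
    (continuous_apply r).comp (continuous_subtype_val.comp a.prop.1),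
    fun s t => a.prop.2 s t r⟩

theorem continuous_z1LimProj (r : R) : Continuous fun a : Z1Lim acr φ => z1LimProj a r :=
  Continuous.subtype_mk (continuous_pi fun s => (continuous_apply r).comp
    (continuous_subtype_val.comp ((continuous_apply s).comp continuous_subtype_val))) _

theorem comp_z1LimProj (a : Z1Lim acr φ) {r t : R} (hle : t ≤ r) :
    φ hle ∘ (z1LimProj a r).val = (z1LimProj a t).val :=
  funext fun s => (a.val s).prop r t hle

theorem comp_twist_z1LimProj
    (hφmul : ∀ (r t : R) (h : t ≤ r) (x y : Ar r), φ h (x * y) = φ h x * φ h y)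
    (hφequiv : ∀ (r t : R) (h : t ≤ r) (s : G) (x : Ar r),
      φ h (acr r s x) = acr t s (φ h x))
    (a : Z1Lim acr φ) {r t : R} (hle : t ≤ r) (x : Ar r) :
    φ hle ∘ twist (acr r) (z1LimProj a r).val x =
      twist (acr t) (z1LimProj a t).val (φ hle x) := by
  rw [comp_twist _ (hφmul r t hle) (hφequiv r t hle), comp_z1LimProj]

def z1LimMk (c : ∀ r, Z1r acr r)
    (hc : ∀ (r t : R) (h : t ≤ r) (s : G), φ h ((c r).val s) = (c t).val s) :
    Z1Lim acr φ :=
  ⟨fun s => ⟨fun r => (c r).val s, fun r t h => hc r t h s⟩,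
    Continuous.subtype_mk (continuous_pi fun r => (c r).prop.1) _,
    fun s t r => (c r).prop.2 s t⟩

/-- `Θ`, as a map into `∏_r H¹_cts(G, A_r)_po`. -/
def theta : Quot (CohLim acr φ) → ∀ r, Quot (Cohr acr r) :=
  Quot.lift (fun a r => Quot.mk _ (z1LimProj a r))
    fun _ _ ⟨x, hx⟩ => funext fun r => Quot.sound ⟨x.val r, fun s => hx s r⟩

/-- `lim_r H¹_cts(G, A_r)_po`. -/
abbrev H1InvLim (acr : ∀ r, G → Ar r → Ar r) (φ : ∀ ⦃r t : R⦄, t ≤ r → Ar r → Ar t) : Type :=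
  {h : ∀ r, Quot (Cohr acr r) //
    ∀ (r t : R) (hle : t ≤ r) (b : Z1r acr r), h r = Quot.mk _ b →
      ∃ c : Z1r acr t, (∀ s : G, c.val s = φ hle (b.val s)) ∧ h t = Quot.mk _ c}

theorem continuous_theta : Continuous (theta (acr := acr) (φ := φ)) :=
  continuous_quot_lift _ <| continuous_pi fun r =>
    continuous_quot_mk.comp (continuous_z1LimProj r)

theorem theta_compatible
    (hdistr : ∀ r (s : G) (x y : Ar r), acr r s (x * y) = acr r s x * acr r s y)
    (hφcont : ∀ (r t : R) (h : t ≤ r), Continuous (φ h))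
    (hφmul : ∀ (r t : R) (h : t ≤ r) (x y : Ar r), φ h (x * y) = φ h x * φ h y)
    (hφequiv : ∀ (r t : R) (h : t ≤ r) (s : G) (x : Ar r),
      φ h (acr r s x) = acr t s (φ h x))
    (q : Quot (CohLim acr φ)) (r t : R) (hle : t ≤ r) (b : Z1r acr r)
    (hb : theta q r = Quot.mk _ b) :
    ∃ c : Z1r acr t, (∀ s : G, c.val s = φ hle (b.val s)) ∧ theta q t = Quot.mk _ c := by
  obtain ⟨a, rfl⟩ := Quot.exists_rep q
  obtain ⟨x, hx⟩ := cohr_iff_exists_twist.1 ((quot_mk_cohr_eq_iff hdistr).1 hb)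
  let c : Z1r acr t := ⟨φ hle ∘ b.val, (hφcont r t hle).comp b.prop.1, fun s u => by
    simp only [comp_apply, b.prop.2 s u, hφmul, hφequiv]⟩
  refine ⟨c, fun _ => rfl, Quot.sound (cohr_iff_exists_twist.2 ⟨φ hle x, ?_⟩)⟩
  rw [← comp_twist_z1LimProj hφmul hφequiv, ← hx]

def thetaLim
    (hdistr : ∀ r (s : G) (x y : Ar r), acr r s (x * y) = acr r s x * acr r s y)
    (hφcont : ∀ (r t : R) (h : t ≤ r), Continuous (φ h))
    (hφmul : ∀ (r t : R) (h : t ≤ r) (x y : Ar r), φ h (x * y) = φ h x * φ h y)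
    (hφequiv : ∀ (r t : R) (h : t ≤ r) (s : G) (x : Ar r),
      φ h (acr r s x) = acr t s (φ h x))
    (q : Quot (CohLim acr φ)) : H1InvLim acr φ :=
  ⟨theta q, theta_compatible hdistr hφcont hφmul hφequiv q⟩

theorem theta_injective [IsDirected R (· ≤ ·)] [∀ r, IsTopologicalGroup (Ar r)]
    [∀ r, T2Space (Ar r)] [∀ r, CompactSpace (Ar r)]
    (hacr : ∀ r, Continuous fun p : G × Ar r => acr r p.1 p.2)
    (hdistr : ∀ r (s : G) (x y : Ar r), acr r s (x * y) = acr r s x * acr r s y)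
    (hφcont : ∀ (r t : R) (h : t ≤ r), Continuous (φ h))
    (hφid : ∀ r : R, φ (le_refl r) = id)
    (hφcomp : ∀ (r t u : R) (h1 : u ≤ t) (h2 : t ≤ r) (x : Ar r),
      φ h1 (φ h2 x) = φ (h1.trans h2) x)
    (hφmul : ∀ (r t : R) (h : t ≤ r) (x y : Ar r), φ h (x * y) = φ h x * φ h y)
    (hφequiv : ∀ (r t : R) (h : t ≤ r) (s : G) (x : Ar r),
      φ h (acr r s x) = acr t s (φ h x)) :
    Injective (theta (acr := acr) (φ := φ)) := by
  intro p q hpq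
  obtain ⟨a, rfl⟩ := Quot.exists_rep p
  obtain ⟨b, rfl⟩ := Quot.exists_rep q
  let X : ∀ r, Set (Ar r) := fun r =>
    {x | (z1LimProj b r).val = twist (acr r) (z1LimProj a r).val x}
  have hXne : ∀ r, (X r).Nonempty := fun r =>
    cohr_iff_exists_twist.1 ((quot_mk_cohr_eq_iff hdistr).1 (congrFun hpq r))
  have hXc : ∀ r, IsCompact (X r) := fun r => (isClosed_eq continuous_const
    (continuous_twist_right (fun s => (hacr r).comp (Continuous.prodMk_right s)) _)).isCompact
  have hXmap : ∀ (r t : R) (h : t ≤ r), ∀ x ∈ X r, φ h x ∈ X t := fun r t h x hx => by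
    simp only [X, Set.mem_ofPred_eq] at hx ⊢
    rw [← comp_z1LimProj b h, hx, comp_twist_z1LimProj hφmul hφequiv]
  obtain ⟨x, hxX, hx⟩ := exists_mem_sections_of_isCompact φ (fun r y => congrFun (hφid r) y)
    hφcomp hφcont X hXne hXc hXmap
  exact Quot.sound ⟨⟨x, hx⟩, fun s r => congrFun (hxX r) s⟩

theorem exists_theta_eq [IsDirected R (· ≤ ·)] [∀ r, IsTopologicalGroup (Ar r)]
    [∀ r, T2Space (Ar r)] [∀ r, CompactSpace (Ar r)]
    (hacr : ∀ r, Continuous fun p : G × Ar r => acr r p.1 p.2)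
    (hcompr : ∀ r (s t : G) (x : Ar r), acr r (s * t) x = acr r s (acr r t x))
    (hdistr : ∀ r (s : G) (x y : Ar r), acr r s (x * y) = acr r s x * acr r s y)
    (hφcont : ∀ (r t : R) (h : t ≤ r), Continuous (φ h))
    (hφid : ∀ r : R, φ (le_refl r) = id)
    (hφcomp : ∀ (r t u : R) (h1 : u ≤ t) (h2 : t ≤ r) (x : Ar r),
      φ h1 (φ h2 x) = φ (h1.trans h2) x)
    (hφmul : ∀ (r t : R) (h : t ≤ r) (x y : Ar r), φ h (x * y) = φ h x * φ h y)
    (hφequiv : ∀ (r t : R) (h : t ≤ r) (s : G) (x : Ar r),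
      φ h (acr r s x) = acr t s (φ h x))
    (h : ∀ r, Quot (Cohr acr r))
    (hh : ∀ (r t : R) (hle : t ≤ r) (b : Z1r acr r), h r = Quot.mk _ b →
      ∃ c : Z1r acr t, (∀ s : G, c.val s = φ hle (b.val s)) ∧ h t = Quot.mk _ c) :
    ∃ q : Quot (CohLim acr φ), theta q = h := by
  choose b hb using fun r => Quot.exists_rep (h r)
  have hcompat : ∀ (r t : R) (hle : t ≤ r),
      ∃ y, φ hle ∘ (b r).val = twist (acr t) (b t).val y := by
    intro r t hle
    obtain ⟨c, hc, hct⟩ := hh r t hle (b r) (hb r).symm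
    obtain ⟨y, hy⟩ :=
      cohr_iff_exists_twist.1 ((quot_mk_cohr_eq_iff hdistr).1 ((hb t).trans hct))
    exact ⟨y, (funext hc).symm.trans hy⟩
  obtain ⟨f, hfX, hf⟩ := exists_mem_sections_of_isCompact (Z := fun r => G → Ar r)
    (fun r t hle g => φ hle ∘ g) (fun r g => by rw [hφid]; rfl)
    (fun r t u h1 h2 g => funext fun s => hφcomp r t u h1 h2 (g s))
    (fun r t hle => continuous_pi fun s => (hφcont r t hle).comp (continuous_apply s))
    (fun r => Set.range (twist (acr r) (b r).val)) (fun r => Set.range_nonempty _)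
    (fun r => isCompact_range <|
      continuous_twist_right (fun s => (hacr r).comp (Continuous.prodMk_right s)) _)
    (by
      rintro r t hle _ ⟨x, rfl⟩
      obtain ⟨y, hy⟩ := hcompat r t hle
      exact ⟨y * φ hle x, by
        rw [comp_twist _ (hφmul r t hle) (hφequiv r t hle), hy, twist_twist (hdistr t)]⟩)
  choose x hx using hfX
  let a : Z1Lim acr φ := z1LimMk (fun r => z1rTwist hacr hcompr hdistr (b r) (x r))
    fun r t hle s => by
      change φ hle (twist (acr r) (b r).val (x r) s) = twist (acr t) (b t).val (x t) s
      rw [hx r, hx t]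
      exact congrFun (hf r t hle) s
  refine ⟨Quot.mk _ a, funext fun r => ?_⟩
  rw [← hb r]
  exact (Quot.sound ⟨x r, fun s => rfl⟩).symm

theorem compactSpace_z1Lim [CompactSpace (InvLim φ)] [∀ r, IsTopologicalGroup (Ar r)]
    [∀ r, T2Space (Ar r)] (hacr : ∀ r, Continuous fun p : G × Ar r => acr r p.1 p.2)
    (hec : EvenlyContinuousSet {f : G → InvLim φ | Continuous f}) :
    CompactSpace (Z1Lim acr φ) := by
  have hcont : IsClosed {f : G → InvLim φ | Continuous f} :=
    isClosed_of_closure_subset fun _ hg => hec.continuous_of_mem_closure hg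
  have hcoord : ∀ (s : G) (r : R), Continuous fun a : G → InvLim φ => (a s).val r := fun s r =>
    (continuous_apply r).comp (continuous_subtype_val.comp (continuous_apply s))
  have hcocycle : IsClosed {a : G → InvLim φ |
      ∀ (s t : G) (r : R), (a (s * t)).val r = (a s).val r * acr r s ((a t).val r)} := by
    simp only [Set.ofPred_forall]
    exact isClosed_iInter fun s => isClosed_iInter fun t => isClosed_iInter fun r =>
      isClosed_eq (hcoord (s * t) r) ((hcoord s r).mul
        (((hacr r).comp (Continuous.prodMk_right s)).comp (hcoord t r)))
  exact isCompact_iff_compactSpace.1 (hcont.inter hcocycle).isCompact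

end Cohomology

theorem stmt_10_general
    {G : Type} [Group G] [TopologicalSpace G]
    {R : Type} [PartialOrder R] [IsDirected R (· ≤ ·)]
    (Ar : R → Type) [∀ r, Group (Ar r)] [∀ r, TopologicalSpace (Ar r)]
    [∀ r, IsTopologicalGroup (Ar r)] [∀ r, T2Space (Ar r)] [∀ r, CompactSpace (Ar r)]
    (acr : ∀ r, G → Ar r → Ar r)
    (hacr : ∀ r, Continuous fun p : G × Ar r => acr r p.1 p.2)
    (hcompr : ∀ r (s t : G) (x : Ar r), acr r (s * t) x = acr r s (acr r t x))
    (hdistr : ∀ r (s : G) (x y : Ar r), acr r s (x * y) = acr r s x * acr r s y)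
    (φ : ∀ ⦃r t : R⦄, t ≤ r → Ar r → Ar t)
    (hφcont : ∀ (r t : R) (h : t ≤ r), Continuous (φ h))
    (hφid : ∀ r : R, φ (le_refl r) = id)
    (hφcomp : ∀ (r t u : R) (h1 : u ≤ t) (h2 : t ≤ r) (x : Ar r),
      φ h1 (φ h2 x) = φ (h1.trans h2) x)
    (hφmul : ∀ (r t : R) (h : t ≤ r) (x y : Ar r), φ h (x * y) = φ h x * φ h y)
    (hφequiv : ∀ (r t : R) (h : t ≤ r) (s : G) (x : Ar r),
      φ h (acr r s x) = acr t s (φ h x))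
    -- `A` is a compact `G`-group
    (hAcomp : CompactSpace (InvLim φ)) :
    ∃ Θ : Quot (CohLim acr φ) →
        {h : ∀ r, Quot (Cohr acr r) //
          ∀ (r t : R) (hle : t ≤ r) (b : Z1r acr r), h r = Quot.mk _ b →
            ∃ c : Z1r acr t, (∀ s : G, c.val s = φ hle (b.val s)) ∧
              h t = Quot.mk _ c},
      -- `Θ` is given by `[a] ↦ ([φ_r ∘ a])_r` (well-definedness included)
      (∀ (a : Z1Lim acr φ) (r : R), ∃ c : Z1r acr r,
        (∀ s : G, c.val s = (a.val s).val r) ∧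
        (Θ (Quot.mk _ a)).val r = Quot.mk _ c) ∧
      -- `Θ` is a continuous bijection
      Continuous Θ ∧
      Function.Bijective Θ ∧
      -- homeomorphism under the additional hypotheses
      (CompactSpace G → T2Space G →
        EvenlyContinuousSet {f : G → InvLim φ | Continuous f} →
        IsHomeomorph Θ) := by
  let Θ := thetaLim hdistr hφcont hφmul hφequiv
  have hcont : Continuous Θ := continuous_theta.subtype_mk _
  have hbij : Bijective Θ :=
    ⟨fun p q hpq => theta_injective hacr hdistr hφcont hφid hφcomp hφmul hφequiv
        (congrArg Subtype.val hpq),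
      fun h => (exists_theta_eq hacr hcompr hdistr hφcont hφid hφcomp hφmul hφequiv h.val
        h.prop).imp fun _ hq => Subtype.ext hq⟩
  refine ⟨Θ, fun a r => ⟨z1LimProj a r, fun _ => rfl, rfl⟩, hcont, hbij, fun _ _ hec => ?_⟩
  have := fun r => t2Space_quot_cohr hacr hcompr hdistr r
  have := compactSpace_z1Lim hacr hec
  exact isHomeomorph_iff_continuous_bijective.2 ⟨hcont, hbij⟩

/-- Let `G` be a topological group and `A` a compact `G`-group with a
presentation `A = lim_r A_r` as inverse limit of compact Hausdorff `G`-groups with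
continuous `G`-equivariant transition homomorphisms.  Then
`Θ : H¹_cts(G,A)_po → lim_r H¹_cts(G,A_r)_po`, `[a] ↦ ([φ_r ∘ a])_r`, is a
well-defined continuous bijection; if moreover `G` is compact Hausdorff and `A` is
evenly continuous with respect to `G`, then `Θ` is a homeomorphism. -/
theorem stmt_10
    {G : Type} [Group G] [TopologicalSpace G] [IsTopologicalGroup G]
    {R : Type} [PartialOrder R] [IsDirected R (· ≤ ·)]
    (Ar : R → Type) [∀ r, Group (Ar r)] [∀ r, TopologicalSpace (Ar r)]
    [∀ r, IsTopologicalGroup (Ar r)] [∀ r, T2Space (Ar r)] [∀ r, CompactSpace (Ar r)]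
    (acr : ∀ r, G → Ar r → Ar r)
    (hacr : ∀ r, Continuous fun p : G × Ar r => acr r p.1 p.2)
    (honer : ∀ r (x : Ar r), acr r 1 x = x)
    (hcompr : ∀ r (s t : G) (x : Ar r), acr r (s * t) x = acr r s (acr r t x))
    (hdistr : ∀ r (s : G) (x y : Ar r), acr r s (x * y) = acr r s x * acr r s y)
    (φ : ∀ ⦃r t : R⦄, t ≤ r → Ar r → Ar t)
    (hφcont : ∀ (r t : R) (h : t ≤ r), Continuous (φ h))
    (hφid : ∀ r : R, φ (le_refl r) = id)
    (hφcomp : ∀ (r t u : R) (h1 : u ≤ t) (h2 : t ≤ r) (x : Ar r),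
      φ h1 (φ h2 x) = φ (h1.trans h2) x)
    (hφmul : ∀ (r t : R) (h : t ≤ r) (x y : Ar r), φ h (x * y) = φ h x * φ h y)
    (hφequiv : ∀ (r t : R) (h : t ≤ r) (s : G) (x : Ar r),
      φ h (acr r s x) = acr t s (φ h x))
    -- `A` is a compact `G`-group
    (hAcomp : CompactSpace (InvLim φ)) :
    ∃ Θ : Quot (CohLim acr φ) →
        {h : ∀ r, Quot (Cohr acr r) //
          ∀ (r t : R) (hle : t ≤ r) (b : Z1r acr r), h r = Quot.mk _ b →
            ∃ c : Z1r acr t, (∀ s : G, c.val s = φ hle (b.val s)) ∧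
              h t = Quot.mk _ c},
      -- `Θ` is given by `[a] ↦ ([φ_r ∘ a])_r` (well-definedness included)
      (∀ (a : Z1Lim acr φ) (r : R), ∃ c : Z1r acr r,
        (∀ s : G, c.val s = (a.val s).val r) ∧
        (Θ (Quot.mk _ a)).val r = Quot.mk _ c) ∧
      -- `Θ` is a continuous bijection
      Continuous Θ ∧
      Function.Bijective Θ ∧
      -- homeomorphism under the additional hypotheses
      (CompactSpace G → T2Space G →
        EvenlyContinuousSet {f : G → InvLim φ | Continuous f} →
        IsHomeomorph Θ) :=
  stmt_10_general Ar acr hacr hcompr hdistr φ hφcont hφid hφcomp hφmul hφequiv hAcomp
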